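/- Every finite-dimensional associative division algebra over ℝ is isomorphic (as an ℝ-algebra) to ℝ, ℂ, or the quaternions ℍ (Frobenius' theorem). -/

import Mathlib

/-!
The minimal polynomial of any `x` is irreducible over `ℝ`, hence of degree at most two, so
completing the square writes `x = r + u` with `r` real and `u * u` a nonpositive real (`u` is
imaginary). Comparing the quadratic relations of `u + v` and `u - v` shows that imaginary elements
are closed under addition and that `u * v + v * u` is real for imaginary `u`, `v`: the imaginary
part carries the negative definite form `u * v + v * u`. Gram–Schmidt gives `i`, `j` with
`i * i = j * j = -1` and `i * j = - j * i` as soon as the imaginary part has dimension at least two,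
and an imaginary element orthogonal to `i`, `j`, `k = i * j` anticommutes with `i` and `j`, hence
commutes with `k`, so it vanishes. Thus `D` is spanned by `1`, by `1, i`, or by `1, i, j, k`.
-/

open Polynomial

namespace RealDivisionAlgebra

variable {D : Type*} [Ring D] [Algebra ℝ D]

def IsImaginary (u : D) : Prop := ∃ r : ℝ, r ≤ 0 ∧ u * u = r • (1 : D)

theorem isImaginary_of_mul_self_eq_neg_one {u : D} (hu : u * u = -1) : IsImaginary u :=
  ⟨-1, by norm_num, by rw [hu, neg_smul, one_smul]⟩

theorem IsImaginary.smul {u : D} (hu : IsImaginary u) (t : ℝ) : IsImaginary (t • u) := by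
  obtain ⟨r, hr, h⟩ := hu
  exact ⟨t * t * r, mul_nonpos_of_nonneg_of_nonpos (mul_self_nonneg t) hr,
    by rw [smul_mul_smul_comm, h, smul_smul]⟩

variable [IsDomain D]

theorem exists_mul_self_eq_smul_add_smul_one {x : D} (hx : IsIntegral ℝ x) :
    ∃ a b : ℝ, x * x = a • x + b • (1 : D) := by
  have hdeg : (X ^ 2 %ₘ minpoly ℝ x).natDegree ≤ 1 := by
    have := natDegree_modByMonic_lt (X ^ 2) (minpoly.monic hx) (minpoly.ne_one ℝ x)
    have := (minpoly.irreducible hx).natDegree_le_two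
    omega
  have hx2 := aeval_modByMonic_eq_self_of_root (p := X ^ 2) (minpoly.aeval ℝ x)
  rw [eq_X_add_C_of_natDegree_le_one hdeg] at hx2
  exact ⟨_, _, by simpa [Algebra.smul_def, pow_two] using hx2.symm⟩

theorem isImaginary_smul_one_iff {r : ℝ} : IsImaginary (r • (1 : D)) ↔ r = 0 := by
  refine ⟨fun ⟨c, hc, h⟩ ↦ ?_, fun hr ↦ ⟨0, le_rfl, by simp [hr]⟩⟩
  rw [smul_mul_smul_comm, one_mul] at h
  have : r * r = c := smul_left_injective ℝ one_ne_zero h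
  nlinarith

theorem IsImaginary.ne_smul_one {u : D} (hu : IsImaginary u) (hu0 : u ≠ 0) (r : ℝ) :
    u ≠ r • 1 := by
  rintro rfl
  exact hu0 (by rw [isImaginary_smul_one_iff.mp hu, zero_smul])

theorem isImaginary_or_exists_eq_smul_one {x : D} {c : ℝ} (h : x * x = c • (1 : D)) :
    IsImaginary x ∨ ∃ r : ℝ, x = r • (1 : D) := by
  rcases le_or_gt c 0 with hc | hc
  · exact .inl ⟨c, hc, h⟩
  have hfactor : (x - √c • 1) * (x + √c • 1) = 0 := by
    have : (x - √c • 1) * (x + √c • 1) = x * x - (√c * √c) • (1 : D) := by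
      simp only [sub_mul, mul_add, smul_mul_assoc, mul_smul_comm, one_mul, mul_one]
      module
    rw [this, Real.mul_self_sqrt hc.le, h, sub_self]
  rcases mul_eq_zero.mp hfactor with h' | h'
  · exact .inr ⟨√c, sub_eq_zero.mp h'⟩
  · exact .inr ⟨-√c, by rw [neg_smul]; exact eq_neg_of_add_eq_zero_left h'⟩

theorem exists_eq_smul_one_add_isImaginary {x : D} (hx : IsIntegral ℝ x) :
    ∃ (r : ℝ) (u : D), IsImaginary u ∧ x = r • 1 + u := by
  obtain ⟨a, b, hab⟩ := exists_mul_self_eq_smul_add_smul_one hx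
  have hsq : (x - (a / 2) • 1) * (x - (a / 2) • 1) = (a ^ 2 / 4 + b) • (1 : D) := by
    simp only [sub_mul, mul_sub, hab, smul_mul_assoc, mul_smul_comm, one_mul, mul_one]
    match_scalars <;> ring
  rcases isImaginary_or_exists_eq_smul_one hsq with hu | ⟨r, hr⟩
  · exact ⟨a / 2, _, hu, by abel⟩
  · exact ⟨a / 2 + r, 0, ⟨0, le_rfl, by simp⟩, by rw [add_smul, ← hr]; abel⟩

theorem IsImaginary.eq_zero_of_isImaginary_smul_one_add_smul {u : D} (hu : IsImaginary u)
    (hu0 : u ≠ 0) {a b : ℝ} (h : IsImaginary (a • 1 + b • u)) : a = 0 := by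
  by_contra ha
  have hb : b ≠ 0 := by
    rintro rfl
    exact ha (isImaginary_smul_one_iff.mp (by simpa using h))
  obtain ⟨r, -, hr⟩ := id hu
  obtain ⟨c, -, hc⟩ := h
  have hsq : (a • 1 + b • u) * (a • 1 + b • u) = (a * a + b * b * r) • 1 + (2 * a * b) • u := by
    simp only [add_mul, mul_add, smul_mul_assoc, mul_smul_comm, one_mul, mul_one, hr]
    module
  have hab : (2 * a * b) • u = (c - a * a - b * b * r) • (1 : D) := by
    linear_combination (norm := module) hc - hsq
  refine hu.ne_smul_one hu0 ((2 * a * b)⁻¹ * (c - a * a - b * b * r)) ?_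
  rw [← smul_smul, ← hab, smul_smul, inv_mul_cancel₀ (by positivity), one_smul]

theorem IsImaginary.eq_zero_of_smul_add_smul_eq_smul_one {u v : D} (hu : IsImaginary u)
    (hv : IsImaginary v) (hu0 : u ≠ 0) (hvu : ∀ t : ℝ, v ≠ t • u) {a b c : ℝ}
    (h : a • u + b • v = c • 1) : a = 0 ∧ b = 0 := by
  have hb : b = 0 := by
    by_contra hb
    have hv' : v = (b⁻¹ * c) • 1 + (-(b⁻¹ * a)) • u := by
      rw [← smul_smul, ← h, smul_add, smul_smul, smul_smul, inv_mul_cancel₀ hb]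
      module
    have := hu.eq_zero_of_isImaginary_smul_one_add_smul hu0 (hv' ▸ hv)
    exact hvu _ (by rw [hv', this, zero_smul, zero_add])
  refine ⟨?_, hb⟩
  by_contra ha
  rw [hb, zero_smul, add_zero] at h
  exact hu.ne_smul_one hu0 (a⁻¹ * c)
    (by rw [← smul_smul, ← h, smul_smul, inv_mul_cancel₀ ha, one_smul])

theorem IsImaginary.exists_smul_mul_self_eq_neg_one {u : D} (hu : IsImaginary u) (hu0 : u ≠ 0) :
    ∃ s : ℝ, (s • u) * (s • u) = -1 := by
  obtain ⟨r, hr, h⟩ := hu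
  have hr0 : r < 0 := hr.lt_of_ne <| by
    rintro rfl
    exact hu0 (mul_self_eq_zero.mp (by rw [h, zero_smul]))
  refine ⟨(√(-r))⁻¹, ?_⟩
  rw [smul_mul_smul_comm, h, smul_smul, ← mul_inv, Real.mul_self_sqrt (by linarith), inv_neg,
    neg_mul, inv_mul_cancel₀ hr0.ne, neg_smul, one_smul]

theorem _root_.QuaternionAlgebra.Basis.eq_zero_of_anticomm
    (q : QuaternionAlgebra.Basis D (-1 : ℝ) 0 (-1)) {y : D} (hi : y * q.i = -(q.i * y))
    (hj : y * q.j = -(q.j * y)) (hk : y * q.k = -(q.k * y)) : y = 0 := by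
  have hk' : y * q.k = q.k * y := by
    rw [← q.i_mul_j, ← mul_assoc, hi, neg_mul, mul_assoc, hj, mul_neg, neg_neg, mul_assoc]
  have h2 : (2 : ℝ) • (y * q.k) = 0 := by
    rw [two_smul]; nth_rewrite 1 [hk]; rw [hk', neg_add_cancel]
  have hk0 : q.k ≠ 0 := fun h0 ↦ by simpa [h0] using q.k_mul_k
  exact (mul_eq_zero.mp ((smul_eq_zero.mp h2).resolve_left two_ne_zero)).resolve_right hk0

theorem nonempty_algEquiv_of_surjective {A : Type*} [DivisionRing A] [Algebra ℝ A]
    (f : A →ₐ[ℝ] D) (hf : Function.Surjective f) : Nonempty (D ≃ₐ[ℝ] A) :=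
  ⟨(AlgEquiv.ofBijective f ⟨f.toRingHom.injective, hf⟩).symm⟩

variable [Algebra.IsIntegral ℝ D]

theorem IsImaginary.exists_mul_add_mul_eq_smul_one {u v : D} (hu : IsImaginary u)
    (hv : IsImaginary v) : ∃ t : ℝ, u * v + v * u = t • (1 : D) := by
  obtain ⟨a, -, ha⟩ := id hu
  obtain ⟨b, -, hb⟩ := id hv
  by_cases hu0 : u = 0
  · exact ⟨0, by simp [hu0]⟩
  by_cases hvu : ∃ t : ℝ, v = t • u
  · obtain ⟨t, rfl⟩ := hvu
    exact ⟨2 * t * a, by rw [smul_mul_assoc, mul_smul_comm, ha]; module⟩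
  simp only [not_exists] at hvu
  obtain ⟨p, q, hpq⟩ :=
    exists_mul_self_eq_smul_add_smul_one (Algebra.IsIntegral.isIntegral (u + v))
  obtain ⟨p', q', hpq'⟩ :=
    exists_mul_self_eq_smul_add_smul_one (Algebra.IsIntegral.isIntegral (u - v))
  have hplus : (u + v) * (u + v) = (a + b) • 1 + (u * v + v * u) := by
    rw [add_smul, ← ha, ← hb]; noncomm_ring
  have hminus : (u - v) * (u - v) = (a + b) • 1 - (u * v + v * u) := by
    rw [add_smul, ← ha, ← hb]; noncomm_ring
  -- add the relations for `u ± v`; as `1, u, v` are independent, both linear parts vanish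
  have hsum : (p + p') • u + (p - p') • v = (2 * (a + b) - q - q') • (1 : D) := by
    linear_combination (norm := module) hplus + hminus - hpq - hpq'
  obtain ⟨h1, h2⟩ := hu.eq_zero_of_smul_add_smul_eq_smul_one hv hu0 hvu hsum
  have hp : p = 0 := by linarith
  rw [hp, zero_smul, zero_add] at hpq
  exact ⟨q - a - b, by linear_combination (norm := module) hpq - hplus⟩

theorem IsImaginary.add {u v : D} (hu : IsImaginary u) (hv : IsImaginary v) :
    IsImaginary (u + v) := by
  by_cases hu0 : u = 0
  · simpa [hu0] using hv
  obtain ⟨a, -, ha⟩ := id hu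
  obtain ⟨b, -, hb⟩ := id hv
  obtain ⟨t, ht⟩ := hu.exists_mul_add_mul_eq_smul_one hv
  have hsq : (u + v) * (u + v) = (a + b + t) • (1 : D) := by
    rw [add_smul, add_smul, ← ha, ← hb, ← ht]; noncomm_ring
  rcases isImaginary_or_exists_eq_smul_one hsq with h | ⟨r, hr⟩
  · exact h
  have hv' : v = r • 1 + (-1 : ℝ) • u := by rw [← hr]; module
  rw [hv'] at hv
  rw [hr, hu.eq_zero_of_isImaginary_smul_one_add_smul hu0 hv]
  exact isImaginary_smul_one_iff.mpr rfl

theorem nonempty_quaternionBasis {i v : D} (hi : i * i = -1) (hv : IsImaginary v)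
    (hvi : ∀ t : ℝ, v ≠ t • i) : Nonempty (QuaternionAlgebra.Basis D (-1 : ℝ) 0 (-1)) := by
  have hiIm := isImaginary_of_mul_self_eq_neg_one hi
  obtain ⟨t, ht⟩ := hiIm.exists_mul_add_mul_eq_smul_one hv
  have hw0 : v + (t / 2) • i ≠ 0 := fun h ↦
    hvi (-(t / 2)) (by rw [eq_neg_of_add_eq_zero_left h, neg_smul])
  have hwi : (v + (t / 2) • i) * i = -(i * (v + (t / 2) • i)) := by
    simp only [mul_add, add_mul, smul_mul_assoc, mul_smul_comm, hi]
    linear_combination (norm := module) ht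
  obtain ⟨s, hs⟩ := (hv.add (hiIm.smul _)).exists_smul_mul_self_eq_neg_one hw0
  refine ⟨⟨i, s • (v + (t / 2) • i), i * (s • (v + (t / 2) • i)), ?_, ?_, rfl, ?_⟩⟩
  · rw [hi, neg_smul, one_smul, zero_smul, add_zero]
  · rw [hs, neg_smul, one_smul]
  · rw [smul_mul_assoc, hwi, mul_smul_comm, zero_smul, zero_sub, smul_neg]

theorem ofId_surjective_of_forall_isImaginary_eq_zero (h : ∀ u : D, IsImaginary u → u = 0) :
    Function.Surjective (Algebra.ofId ℝ D) := by
  intro x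
  obtain ⟨r, u, hu, rfl⟩ := exists_eq_smul_one_add_isImaginary (Algebra.IsIntegral.isIntegral x)
  exact ⟨r, by rw [h u hu, add_zero, Algebra.ofId_apply, Algebra.algebraMap_eq_smul_one]⟩

theorem liftAux_surjective_of_forall_isImaginary {i : D} (hi : i * i = -1)
    (h : ∀ u : D, IsImaginary u → ∃ t : ℝ, u = t • i) :
    Function.Surjective (Complex.liftAux i hi) := by
  intro x
  obtain ⟨r, u, hu, rfl⟩ := exists_eq_smul_one_add_isImaginary (Algebra.IsIntegral.isIntegral x)
  obtain ⟨t, rfl⟩ := h u hu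
  exact ⟨⟨r, t⟩, by rw [Complex.liftAux_apply, Algebra.algebraMap_eq_smul_one]⟩

theorem _root_.QuaternionAlgebra.Basis.liftHom_surjective
    (q : QuaternionAlgebra.Basis D (-1 : ℝ) 0 (-1)) : Function.Surjective q.liftHom := by
  have hi : q.i * q.i = -1 := by simp
  have hj : q.j * q.j = -1 := by simp
  have hk : q.k * q.k = -1 := by simp
  intro x
  obtain ⟨r, u, hu, rfl⟩ := exists_eq_smul_one_add_isImaginary (Algebra.IsIntegral.isIntegral x)
  obtain ⟨α, hα⟩ := hu.exists_mul_add_mul_eq_smul_one (isImaginary_of_mul_self_eq_neg_one hi)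
  obtain ⟨β, hβ⟩ := hu.exists_mul_add_mul_eq_smul_one (isImaginary_of_mul_self_eq_neg_one hj)
  obtain ⟨γ, hγ⟩ := hu.exists_mul_add_mul_eq_smul_one (isImaginary_of_mul_self_eq_neg_one hk)
  -- `u` minus its components along `i`, `j`, `k` anticommutes with all three
  have hy : u + (α / 2) • q.i + (β / 2) • q.j + (γ / 2) • q.k = 0 := by
    apply q.eq_zero_of_anticomm
    · simp only [add_mul, mul_add, smul_mul_assoc, mul_smul_comm, hi, q.i_mul_j, q.j_mul_i,
        q.i_mul_k, q.k_mul_i]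
      linear_combination (norm := module) hα
    · simp only [add_mul, mul_add, smul_mul_assoc, mul_smul_comm, hj, q.i_mul_j, q.j_mul_i,
        q.j_mul_k, q.k_mul_j]
      linear_combination (norm := module) hβ
    · simp only [add_mul, mul_add, smul_mul_assoc, mul_smul_comm, hk, q.i_mul_k, q.k_mul_i,
        q.j_mul_k, q.k_mul_j]
      linear_combination (norm := module) hγ
  refine ⟨⟨r, -(α / 2), -(β / 2), -(γ / 2)⟩, ?_⟩
  simp only [QuaternionAlgebra.Basis.liftHom_apply, QuaternionAlgebra.Basis.lift,
    Algebra.algebraMap_eq_smul_one]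
  linear_combination (norm := module) -hy

theorem nonempty_algEquiv_real_or_complex_or_quaternion :
    Nonempty (D ≃ₐ[ℝ] ℝ) ∨ Nonempty (D ≃ₐ[ℝ] ℂ) ∨ Nonempty (D ≃ₐ[ℝ] Quaternion ℝ) := by
  by_cases hℝ : ∀ u : D, IsImaginary u → u = 0
  · exact .inl <|
      nonempty_algEquiv_of_surjective _ (ofId_surjective_of_forall_isImaginary_eq_zero hℝ)
  simp only [not_forall] at hℝ
  obtain ⟨u, hu, hu0⟩ := hℝ
  obtain ⟨s, hi⟩ := hu.exists_smul_mul_self_eq_neg_one hu0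
  by_cases hℂ : ∀ v : D, IsImaginary v → ∃ t : ℝ, v = t • (s • u)
  · exact .inr <| .inl <|
      nonempty_algEquiv_of_surjective _ (liftAux_surjective_of_forall_isImaginary hi hℂ)
  simp only [not_forall, not_exists] at hℂ
  obtain ⟨v, hv, hvi⟩ := hℂ
  obtain ⟨q⟩ := nonempty_quaternionBasis hi hv hvi
  exact .inr <| .inr <| nonempty_algEquiv_of_surjective _ q.liftHom_surjective

end RealDivisionAlgebra

/-- Frobenius' theorem: every finite-dimensional associative unital
division algebra over `ℝ` (a nontrivial associative unital `ℝ`-algebra in which every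
nonzero element is invertible) is isomorphic as an `ℝ`-algebra to `ℝ`, `ℂ`, or the
quaternions `ℍ`. -/
theorem stmt10 {D : Type*} [Ring D] [Nontrivial D] [Algebra ℝ D] [FiniteDimensional ℝ D]
    (hdiv : ∀ x : D, x ≠ 0 → IsUnit x) :
    Nonempty (D ≃ₐ[ℝ] ℝ) ∨ Nonempty (D ≃ₐ[ℝ] ℂ) ∨ Nonempty (D ≃ₐ[ℝ] Quaternion ℝ) := by
  have : NoZeroDivisors D :=
    ⟨fun {a _} h ↦ or_iff_not_imp_left.mpr fun ha ↦ (hdiv a ha).mul_right_eq_zero.mp h⟩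
  have : IsDomain D := NoZeroDivisors.to_isDomain D
  exact RealDivisionAlgebra.nonempty_algEquiv_real_or_complex_or_quaternion
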